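/- Let σ, ρ, β > 0 and let F be the Lorenz vector field. There exists R > 0 (depending only on σ, ρ, β) such that every forward solution of the Lorenz system remains bounded: if γ : [0, ∞) → ℝ³ is differentiable with γ'(t) = F(γ(t)) for all t ≥ 0, then V(γ(t)) ≤ max(V(γ(0)), R) for all t ≥ 0, where V(x, y, z) = x² + y² + (z − σ − ρ)². In particular, trajectories initialized in a sufficiently large ball centered at (0, 0, σ + ρ) remain in that ball forever. -/

import Mathlib

/-- The Lorenz vector field with parameters `σ, ρ, β`. -/
def lorenz (σ ρ β : ℝ) (p : ℝ × ℝ × ℝ) : ℝ × ℝ × ℝ :=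
  (σ * (p.2.1 - p.1), p.1 * (ρ - p.2.2) - p.2.1, p.1 * p.2.1 - β * p.2.2)

/-- The squared distance to the point `(0, 0, σ + ρ)`. -/
def lorenzV (σ ρ : ℝ) (p : ℝ × ℝ × ℝ) : ℝ :=
  p.1 ^ 2 + p.2.1 ^ 2 + (p.2.2 - σ - ρ) ^ 2

/-!
Along the Lorenz flow, `V` satisfies the differential inequality `V' ≤ -c V + β (σ + ρ)²` with
`c = min (2σ, 2, β) > 0`: the cross terms in `x y` cancel exactly because the centre
`(0, 0, σ + ρ)` is chosen on the `z`-axis at height `σ + ρ`. Grönwall's inequality then shows that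
`V` relaxes exponentially towards a value at most `β (σ + ρ)² / c`, so it never exceeds
`max (V(γ 0), β (σ + ρ)² / c)`.
-/

open Real

lemma gronwallBound_neg_le_max {δ c A x : ℝ} (hc : 0 < c) (hx : 0 ≤ x) :
    gronwallBound δ (-c) A x ≤ max δ (A / c) := by
  set e := exp (-c * x)
  have he₀ : 0 ≤ e := (exp_pos _).le
  have he₁ : e ≤ 1 := exp_le_one_iff.2 (by nlinarith)
  calc gronwallBound δ (-c) A x = δ * e + A / c * (1 - e) := by
        rw [gronwallBound_of_K_ne_0 (neg_ne_zero.2 hc.ne'), div_neg]; ring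
    _ ≤ max δ (A / c) * e + max δ (A / c) * (1 - e) := by
        have h1e : 0 ≤ 1 - e := by linarith
        gcongr
        · exact le_max_left _ _
        · exact le_max_right _ _
    _ = max δ (A / c) := by ring

theorem le_max_of_hasDerivAt_le_neg_mul_add {f f' : ℝ → ℝ} {c A : ℝ} (hc : 0 < c)
    (hf : ∀ t, 0 ≤ t → HasDerivAt f (f' t) t) (bound : ∀ t, 0 ≤ t → f' t ≤ -c * f t + A)
    {t : ℝ} (ht : 0 ≤ t) : f t ≤ max (f 0) (A / c) := by
  have hgronwall : f t ≤ gronwallBound (f 0) (-c) A (t - 0) :=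
    le_gronwallBound_of_liminf_deriv_right_le
      (fun s hs => (hf s hs.1).continuousAt.continuousWithinAt)
      (fun s hs _ hr => (hf s hs.1).hasDerivWithinAt.liminf_right_slope_le hr)
      le_rfl (fun s hs => bound s hs.1) t ⟨ht, le_rfl⟩
  rw [sub_zero] at hgronwall
  exact hgronwall.trans (gronwallBound_neg_le_max hc ht)

theorem HasDerivAt.lorenzV {γ : ℝ → ℝ × ℝ × ℝ} {v : ℝ × ℝ × ℝ} {t : ℝ} (σ ρ : ℝ)
    (hγ : HasDerivAt γ v t) :
    HasDerivAt (fun s => lorenzV σ ρ (γ s))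
      (2 * ((γ t).1 * v.1 + (γ t).2.1 * v.2.1 + ((γ t).2.2 - σ - ρ) * v.2.2)) t := by
  have hx : HasDerivAt (fun s => (γ s).1) v.1 t :=
    (hasFDerivAt_fst (𝕜 := ℝ) (E := ℝ) (F := ℝ × ℝ)).comp_hasDerivAt t hγ
  have hyz : HasDerivAt (fun s => (γ s).2) v.2 t :=
    (hasFDerivAt_snd (𝕜 := ℝ) (E := ℝ) (F := ℝ × ℝ)).comp_hasDerivAt t hγ
  have hy : HasDerivAt (fun s => (γ s).2.1) v.2.1 t :=
    (hasFDerivAt_fst (𝕜 := ℝ) (E := ℝ) (F := ℝ)).comp_hasDerivAt t hyz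
  have hz : HasDerivAt (fun s => (γ s).2.2) v.2.2 t :=
    (hasFDerivAt_snd (𝕜 := ℝ) (E := ℝ) (F := ℝ)).comp_hasDerivAt t hyz
  exact ((hx.pow 2).add (hy.pow 2)).add (((hz.sub_const σ).sub_const ρ).pow 2)
    |>.congr_deriv (by ring)

lemma lorenzV_deriv_le {σ ρ β c : ℝ} (hβ : 0 < β) (hcσ : c ≤ 2 * σ) (hc₂ : c ≤ 2) (hcβ : c ≤ β)
    (p : ℝ × ℝ × ℝ) :
    2 * (p.1 * (lorenz σ ρ β p).1 + p.2.1 * (lorenz σ ρ β p).2.1 +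
        (p.2.2 - σ - ρ) * (lorenz σ ρ β p).2.2) ≤
      -c * lorenzV σ ρ p + β * (σ + ρ) ^ 2 := by
  obtain ⟨x, y, z⟩ := p
  set w := z - σ - ρ
  have hcancel : 2 * (x * (σ * (y - x)) + y * (x * (ρ - z) - y) + w * (x * y - β * z)) =
      -2 * σ * x ^ 2 - 2 * y ^ 2 - 2 * β * w ^ 2 - 2 * β * (σ + ρ) * w := by
    simp only [w]; ring
  simp only [lorenz, lorenzV, hcancel]
  -- `-2β(σ + ρ)w ≤ βw² + β(σ + ρ)²` is `β z² ≥ 0`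
  nlinarith [mul_nonneg hβ.le (sq_nonneg (w + σ + ρ)),
    mul_le_mul_of_nonneg_right hcσ (sq_nonneg x), mul_le_mul_of_nonneg_right hc₂ (sq_nonneg y),
    mul_le_mul_of_nonneg_right hcβ (sq_nonneg w)]

/-- There exists `R > 0`, depending only on `σ, ρ, β`, such that every forward solution of
the Lorenz system remains bounded: `V(γ(t)) ≤ max (V(γ(0))) R` for all `t ≥ 0`, where `V`
is the squared distance to `(0, 0, σ + ρ)`. In particular trajectories initialized in a
sufficiently large ball centered at `(0, 0, σ + ρ)` remain in that ball forever. -/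
theorem lorenz_forward_bounded (σ ρ β : ℝ) (hσ : 0 < σ) (hρ : 0 < ρ) (hβ : 0 < β) :
    ∃ R : ℝ, 0 < R ∧
      ∀ γ : ℝ → ℝ × ℝ × ℝ, (∀ t : ℝ, 0 ≤ t → HasDerivAt γ (lorenz σ ρ β (γ t)) t) →
        ∀ t : ℝ, 0 ≤ t → lorenzV σ ρ (γ t) ≤ max (lorenzV σ ρ (γ 0)) R := by
  set c := min (2 * σ) (min 2 β)
  have hc : 0 < c := lt_min (by positivity) (lt_min two_pos hβ)
  refine ⟨β * (σ + ρ) ^ 2 / c, by positivity, fun γ hγ t ht => ?_⟩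
  refine le_max_of_hasDerivAt_le_neg_mul_add hc (fun s hs => (hγ s hs).lorenzV σ ρ)
    (fun s _ => lorenzV_deriv_le hβ (min_le_left _ _) ?_ ?_ (γ s)) ht
  · exact (min_le_right _ _).trans (min_le_left _ _)
  · exact (min_le_right _ _).trans (min_le_right _ _)
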